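/- arXiv:2407.14094 — 5 statements merged into one kernel-verified Lean document; each statement's English description precedes it below -/
import Mathlib

section
/- Let x, z ∈ R^d with ‖x‖₂ = 1, ‖z‖₂ ≤ 1, y ∈ R^d with ⟨x, y⟩ ≥ 0 and ⟨z, y⟩ ≥ 0, and η > 0. Let x' = (x + ηz)/‖x + ηz‖₂. Then ⟨x' - x, y⟩ ≥ (η/(1 + η‖z‖₂)) · (⟨z, y⟩ - ‖z‖₂⟨x, y⟩). -/
open scoped InnerProductSpace

theorem stmt_3 {d : ℕ} (x z y : EuclideanSpace ℝ (Fin d))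
    (hx : ‖x‖ = 1) (hz : ‖z‖ ≤ 1)
    (hxy : 0 ≤ ⟪x, y⟫_ℝ) (hzy : 0 ≤ ⟪z, y⟫_ℝ)
    (η : ℝ) (hη : 0 < η) (hne : x + η • z ≠ 0)
    (x' : EuclideanSpace ℝ (Fin d))
    (hx' : x' = ‖x + η • z‖⁻¹ • (x + η • z)) :
    ⟪x' - x, y⟫_ℝ ≥ (η / (1 + η * ‖z‖)) * (⟪z, y⟫_ℝ - ‖z‖ * ⟪x, y⟫_ℝ) := by
  have hn : 0 < ‖x + η • z‖ := norm_pos_iff.mpr hne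
  have hnle : ‖x + η • z‖ ≤ 1 + η * ‖z‖ := by
    calc ‖x + η • z‖ ≤ ‖x‖ + ‖η • z‖ := norm_add_le _ _
      _ = 1 + η * ‖z‖ := by rw [hx, norm_smul, Real.norm_eq_abs, abs_of_pos hη]
  have hm : 0 < 1 + η * ‖z‖ := lt_of_lt_of_le hn hnle
  have hinv : (1 + η * ‖z‖)⁻¹ ≤ ‖x + η • z‖⁻¹ := by
    exact inv_anti₀ hn hnle
  have hmc : (1 + η * ‖z‖)⁻¹ * (1 + η * ‖z‖) = 1 := inv_mul_cancel₀ (ne_of_gt hm)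
  have expand : ⟪x' - x, y⟫_ℝ =
      ‖x + η • z‖⁻¹ * ⟪x, y⟫_ℝ + ‖x + η • z‖⁻¹ * η * ⟪z, y⟫_ℝ - ⟪x, y⟫_ℝ := by
    rw [hx', inner_sub_left, real_inner_smul_left, inner_add_left, real_inner_smul_left]
    ring
  rw [expand, div_eq_mul_inv]
  have key : 0 ≤ (‖x + η • z‖⁻¹ - (1 + η * ‖z‖)⁻¹) * (η * ⟪z, y⟫_ℝ + ⟪x, y⟫_ℝ) :=
    mul_nonneg (sub_nonneg.2 hinv) (add_nonneg (mul_nonneg hη.le hzy) hxy)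
  nlinarith [key, hmc, mul_nonneg hxy (mul_nonneg hη.le (norm_nonneg z))]
end

section
/- Let x, z ∈ R^d with ‖x‖₂ = ‖z‖₂ = 1, ⟨x, z⟩ ≥ 0, and η > 0. Let x' = (x + ηz)/‖x + ηz‖₂. Then ⟨x' - x, z⟩ ≥ (η/(1 + η)) · (1 - ⟨x, z⟩). -/
open scoped InnerProductSpace

theorem stmt_4 {d : ℕ} (x z : EuclideanSpace ℝ (Fin d))
    (hx : ‖x‖ = 1) (hz : ‖z‖ = 1) (hxz : 0 ≤ ⟪x, z⟫_ℝ)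
    (η : ℝ) (hη : 0 < η)
    (x' : EuclideanSpace ℝ (Fin d))
    (hx' : x' = ‖x + η • z‖⁻¹ • (x + η • z)) :
    ⟪x' - x, z⟫_ℝ ≥ (η / (1 + η)) * (1 - ⟪x, z⟫_ℝ) := by
  set c : ℝ := ⟪x, z⟫_ℝ with hc
  set N : ℝ := ‖x + η • z‖ with hN
  have hc1 : c ≤ 1 := by
    have := real_inner_le_norm x z
    rw [hx, hz] at this; linarith
  have hN2 : N ^ 2 = 1 + 2 * (η * c) + η ^ 2 := by
    rw [hN, norm_add_sq_real, hx, real_inner_smul_right, norm_smul, hz,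
      Real.norm_eq_abs, abs_of_pos hη]
    ring
  have hN1 : 1 ≤ N := by
    nlinarith [norm_nonneg (x + η • z), mul_nonneg hη.le hxz]
  have hNpos : 0 < N := by linarith
  have hNle : N ≤ 1 + η := by
    calc N ≤ ‖x‖ + ‖η • z‖ := norm_add_le _ _
    _ = 1 + η := by rw [hx, norm_smul, hz, Real.norm_eq_abs, abs_of_pos hη]; ring
  have hinner : ⟪x' - x, z⟫_ℝ = N⁻¹ * (c + η) - c := by
    rw [inner_sub_left, hx', real_inner_smul_left, inner_add_left,
      real_inner_smul_left, real_inner_self_eq_norm_sq, hz]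
    ring
  rw [hinner]
  have hkey : (c + η) / (1 + η) ≤ N⁻¹ * (c + η) := by
    rw [div_eq_inv_mul]
    have : (1 + η)⁻¹ ≤ N⁻¹ := by
      apply inv_anti₀ hNpos hNle
    exact mul_le_mul_of_nonneg_right this (by linarith)
  have heq : (c + η) / (1 + η) - c = η / (1 + η) * (1 - c) := by
    field_simp
    ring
  linarith
end

section
/- Let x, z ∈ R^d with ‖x‖₂ = 1, ‖z‖₂ ≤ 1, ⟨x, z⟩ ≥ 0, and η > 0. Let x' = (x + ηz)/‖x + ηz‖₂. Then ⟨x' - x, z⟩ ≥ (1/η) · ‖x' - x‖₂². -/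
/-! The normalisation `x'` of `y = x + η z` is the nearest point to `y` in the closed unit ball
(as `‖y‖ ≥ 1`), so the variational inequality of the projection, tested at `x`, reads
`⟪y - x', x - x'⟫ ≤ 0`. Since `y - x' = η z + (x - x')`, this is
`η ⟪z, x - x'⟫ + ‖x - x'‖² ≤ 0`. -/

open scoped InnerProductSpace

section

variable {E : Type*} [NormedAddCommGroup E] [InnerProductSpace ℝ E]

theorem one_le_norm_add_smul {x z : E} (hx : ‖x‖ = 1) (hxz : 0 ≤ ⟪x, z⟫_ℝ) {η : ℝ}
    (hη : 0 ≤ η) : 1 ≤ ‖x + η • z‖ :=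
  calc 1 ≤ 1 + η * ⟪x, z⟫_ℝ := le_add_of_nonneg_right (mul_nonneg hη hxz)
    _ = ⟪x, x + η • z⟫_ℝ := by
      rw [inner_add_right, real_inner_smul_right, real_inner_self_eq_norm_sq, hx, one_pow]
    _ ≤ ‖x‖ * ‖x + η • z‖ := real_inner_le_norm _ _
    _ = ‖x + η • z‖ := by rw [hx, one_mul]

theorem inner_sub_normalize_sub_normalize_nonpos {y q : E} (hy : 1 ≤ ‖y‖) (hq : ‖q‖ ≤ 1) :
    ⟪y - ‖y‖⁻¹ • y, q - ‖y‖⁻¹ • y⟫_ℝ ≤ 0 := by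
  set p := ‖y‖⁻¹ • y
  have hy0 : ‖y‖ ≠ 0 := by positivity
  have hp : ‖p‖ = 1 := by rw [norm_smul, norm_inv, norm_norm, inv_mul_cancel₀ hy0]
  have hyp : y - p = (‖y‖ - 1) • p := by
    rw [sub_smul, one_smul, smul_smul, mul_inv_cancel₀ hy0, one_smul]
  have hpq : ⟪p, q⟫_ℝ ≤ 1 :=
    (real_inner_le_norm p q).trans (by rw [hp, one_mul]; exact hq)
  rw [hyp, real_inner_smul_left, inner_sub_right, real_inner_self_eq_norm_sq, hp]
  exact mul_nonpos_of_nonneg_of_nonpos (by linarith) (by linarith)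

end

theorem stmt_5_general {d : ℕ} (x z : EuclideanSpace ℝ (Fin d))
    (hx : ‖x‖ = 1) (hxz : 0 ≤ ⟪x, z⟫_ℝ)
    (η : ℝ) (hη : 0 < η)
    (x' : EuclideanSpace ℝ (Fin d))
    (hx' : x' = ‖x + η • z‖⁻¹ • (x + η • z)) :
    ⟪x' - x, z⟫_ℝ ≥ (1 / η) * ‖x' - x‖ ^ 2 := by
  have hvar := inner_sub_normalize_sub_normalize_nonpos
    (one_le_norm_add_smul hx hxz hη.le) hx.le
  rw [← hx', show x + η • z - x' = η • z - (x' - x) by abel, show x - x' = -(x' - x) by abel,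
    inner_neg_right, inner_sub_left, real_inner_smul_left, real_inner_self_eq_norm_sq,
    real_inner_comm] at hvar
  rw [ge_iff_le, one_div, inv_mul_le_iff₀ hη]
  linarith

theorem stmt_5 {d : ℕ} (x z : EuclideanSpace ℝ (Fin d))
    (hx : ‖x‖ = 1) (hz : ‖z‖ ≤ 1) (hxz : 0 ≤ ⟪x, z⟫_ℝ)
    (η : ℝ) (hη : 0 < η)
    (x' : EuclideanSpace ℝ (Fin d))
    (hx' : x' = ‖x + η • z‖⁻¹ • (x + η • z)) :
    ⟪x' - x, z⟫_ℝ ≥ (1 / η) * ‖x' - x‖ ^ 2 :=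
  stmt_5_general x z hx hxz η hη x' hx'
end

section
/- In the one-step inductive inner-product bound: let u, v be unit vectors in R^d with a := ⟨u, v⟩ > 0, let f ∈ [L_f, 1], η_u < 1/2, η_c ≤ η_u L_f / 2, u' = P(u + η_u f v), and v' = P(v + η_c α) with ‖α‖₂ ≤ 1 and ⟨v, α⟩ ≥ 0. Then ⟨u', v'⟩ ≥ ⟨u, v⟩ + (η_u L_f/(1+η_u L_f))(1 - ⟨u, v⟩) - η_c. -/
open scoped InnerProductSpace

private lemma aux_mono (a s t : ℝ) (ha1 : a ≤ 1) (ht0 : 0 ≤ t) (hts : t ≤ s) :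
    a + (t / (1 + t)) * (1 - a) ≤ (a + s) / (1 + s) := by
  have hs0 : 0 ≤ s := ht0.trans hts
  have h1 : (0:ℝ) < 1 + t := by linarith
  have h2 : (0:ℝ) < 1 + s := by linarith
  rw [le_div_iff₀ h2]
  have hr1 : (t / (1 + t)) * (1 + t) = t := div_mul_cancel₀ _ h1.ne'
  have hr0 : 0 ≤ t / (1 + t) := div_nonneg ht0 h1.le
  have hrle : t / (1 + t) ≤ 1 := (div_le_one h1).mpr (by linarith)
  set r : ℝ := t / (1 + t)
  have hkey : r * (1 + s) ≤ s := by nlinarith [mul_nonneg (sub_nonneg.2 hrle) (sub_nonneg.2 hts)]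
  nlinarith [mul_nonneg (sub_nonneg.2 ha1) (sub_nonneg.2 hkey)]

private lemma aux_proj (M I : ℝ) (hM : 1 ≤ M) (hIM : I ≤ M) :
    2 - 2 * (I / M) ≤ M ^ 2 - 2 * I + 1 := by
  have hM0 : (0:ℝ) < M := lt_of_lt_of_le one_pos hM
  have hJ : (I / M) * M = I := div_mul_cancel₀ _ hM0.ne'
  have hJ1 : I / M ≤ 1 := (div_le_one hM0).mpr hIM
  set J : ℝ := I / M
  nlinarith [mul_nonneg (sub_nonneg.2 hM) (sub_nonneg.2 hJ1)]

set_option maxHeartbeats 1600000 in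
theorem stmt_10 {d : ℕ} (u v α : EuclideanSpace ℝ (Fin d))
    (f ηu ηc Lf : ℝ)
    (hu : ‖u‖ = 1) (hv : ‖v‖ = 1) (ha : 0 < ⟪u, v⟫_ℝ)
    (hLf : 0 < Lf) (hfL : Lf ≤ f) (hf1 : f ≤ 1)
    (hηu0 : 0 ≤ ηu) (hηu : ηu < 1 / 2) (hηc0 : 0 ≤ ηc) (hηc : ηc ≤ ηu * Lf / 2)
    (hα : ‖α‖ ≤ 1) (hvα : 0 ≤ ⟪v, α⟫_ℝ)
    (u' v' : EuclideanSpace ℝ (Fin d))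
    (hu' : u' = ‖u + (ηu * f) • v‖⁻¹ • (u + (ηu * f) • v))
    (hv' : v' = ‖v + ηc • α‖⁻¹ • (v + ηc • α)) :
    ⟪u', v'⟫_ℝ ≥ ⟪u, v⟫_ℝ + (ηu * Lf / (1 + ηu * Lf)) * (1 - ⟪u, v⟫_ℝ) - ηc := by
  have hs0 : 0 ≤ ηu * f := mul_nonneg hηu0 (le_trans hLf.le hfL)
  have hss0 : ηu * Lf ≤ ηu * f := mul_le_mul_of_nonneg_left hfL hηu0
  have hs00 : 0 ≤ ηu * Lf := mul_nonneg hηu0 hLf.le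
  have ha1 : ⟪u, v⟫_ℝ ≤ 1 := by
    have := real_inner_le_norm u v
    simpa [hu, hv] using this
  -- the vector u + s • v
  have hxv : ⟪u + (ηu * f) • v, v⟫_ℝ = ⟪u, v⟫_ℝ + ηu * f := by
    rw [inner_add_left, real_inner_smul_left, real_inner_self_eq_norm_mul_norm, hv]
    ring
  have hxne : u + (ηu * f) • v ≠ 0 := by
    intro h
    rw [h, inner_zero_left] at hxv
    nlinarith
  have hN : 0 < ‖u + (ηu * f) • v‖ := norm_pos_iff.mpr hxne
  have hNle : ‖u + (ηu * f) • v‖ ≤ 1 + ηu * f := by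
    calc ‖u + (ηu * f) • v‖ ≤ ‖u‖ + ‖(ηu * f) • v‖ := norm_add_le _ _
    _ = 1 + ηu * f := by
        rw [norm_smul, hu, hv, Real.norm_eq_abs, abs_of_nonneg hs0, mul_one]
  have hu'v : ⟪u', v⟫_ℝ = (⟪u, v⟫_ℝ + ηu * f) / ‖u + (ηu * f) • v‖ := by
    rw [hu', real_inner_smul_left, hxv, div_eq_inv_mul]
  have hstep1 : (⟪u, v⟫_ℝ + ηu * f) / (1 + ηu * f) ≤ ⟪u', v⟫_ℝ := by
    rw [hu'v]
    exact div_le_div_of_nonneg_left (by nlinarith) hN hNle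
  have hstep2 : ⟪u, v⟫_ℝ + (ηu * Lf / (1 + ηu * Lf)) * (1 - ⟪u, v⟫_ℝ) ≤
      (⟪u, v⟫_ℝ + ηu * f) / (1 + ηu * f) :=
    aux_mono _ _ _ ha1 hs00 hss0
  -- ‖v' - v‖ ≤ ηc
  have hwv : ⟪v + ηc • α, v⟫_ℝ = 1 + ηc * ⟪v, α⟫_ℝ := by
    rw [inner_add_left, real_inner_smul_left, real_inner_self_eq_norm_mul_norm, hv,
      real_inner_comm α v]
    ring
  have hwsq : ‖v + ηc • α‖ * ‖v + ηc • α‖ =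
      1 + 2 * (ηc * ⟪v, α⟫_ℝ) + ηc ^ 2 * ‖α‖ ^ 2 := by
    rw [← real_inner_self_eq_norm_mul_norm, inner_add_add_self, real_inner_smul_left,
      real_inner_smul_right, real_inner_self_eq_norm_mul_norm, hv,
      real_inner_smul_left, real_inner_smul_right, real_inner_self_eq_norm_mul_norm,
      real_inner_comm α v]
    ring
  have hM1 : 1 ≤ ‖v + ηc • α‖ := by
    nlinarith [norm_nonneg (v + ηc • α), mul_nonneg hηc0 hvα, sq_nonneg (ηc * ‖α‖)]
  have hM0 : (0:ℝ) < ‖v + ηc • α‖ := lt_of_lt_of_le one_pos hM1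
  have hIM : ⟪v + ηc • α, v⟫_ℝ ≤ ‖v + ηc • α‖ := by
    have := real_inner_le_norm (v + ηc • α) v
    simpa [hv] using this
  have hv'n : ‖v'‖ = 1 := by
    rw [hv', norm_smul, norm_inv, norm_norm, inv_mul_cancel₀ hM0.ne']
  have hv'v : ⟪v', v⟫_ℝ = ⟪v + ηc • α, v⟫_ℝ / ‖v + ηc • α‖ := by
    rw [hv', real_inner_smul_left, div_eq_inv_mul]
  have hdist : ‖v' - v‖ ≤ ηc := by
    have hsq : ‖v' - v‖ ^ 2 = 2 - 2 * (⟪v + ηc • α, v⟫_ℝ / ‖v + ηc • α‖) := by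
      rw [norm_sub_sq_real, hv'n, hv, hv'v]
      ring
    have key := aux_proj ‖v + ηc • α‖ ⟪v + ηc • α, v⟫_ℝ hM1 hIM
    have hle : ‖v' - v‖ ^ 2 ≤ ηc ^ 2 := by
      rw [hsq]
      have hc2 : ‖v + ηc • α‖ ^ 2 - 2 * ⟪v + ηc • α, v⟫_ℝ + 1 = ηc ^ 2 * ‖α‖ ^ 2 := by
        rw [sq, hwsq, hwv]; ring
      have hα2 : ‖α‖ ^ 2 ≤ 1 := by nlinarith [norm_nonneg α]
      have := mul_le_mul_of_nonneg_left hα2 (sq_nonneg ηc)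
      linarith
    nlinarith [norm_nonneg (v' - v)]
  -- combine
  have hu'n : ‖u'‖ = 1 := by
    rw [hu', norm_smul, norm_inv, norm_norm, inv_mul_cancel₀ hN.ne']
  have hcs : |⟪u', v' - v⟫_ℝ| ≤ ‖u'‖ * ‖v' - v‖ := abs_real_inner_le_norm _ _
  have h4 : ⟪u', v'⟫_ℝ = ⟪u', v⟫_ℝ + ⟪u', v' - v⟫_ℝ := by
    rw [inner_sub_right]; ring
  have h5 : ⟪u', v' - v⟫_ℝ ≥ -ηc := by
    rw [hu'n, one_mul] at hcs
    have := abs_le.mp (hcs.trans hdist)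
    linarith [this.1]
  linarith
end

section
/- Suppose real sequences (A_t)_{t=0}^T, (B_t)_{t=0}^T satisfy ((1+η_c)/η_c)(A_{t+1} - A_t) ≥ B_t - A_t and ((1+η_u)/η_u)(B_{t+1} - B_t) ≥ A_t - B_t for all t < T, with η_u, η_c > 0, η_c ≤ η_u. If B_0 - A_0 = D > 0 and B_T - A_T ≤ R < D, then A_T - A_0 ≥ (η_c/(η_u + η_c))(D - R). -/
theorem stmt_13 (A B : ℕ → ℝ) (T : ℕ) (ηu ηc D R : ℝ)
    (hηu : 0 < ηu) (hηc : 0 < ηc) (hcu : ηc ≤ ηu)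
    (hA : ∀ t < T, ((1 + ηc) / ηc) * (A (t + 1) - A t) ≥ B t - A t)
    (hB : ∀ t < T, ((1 + ηu) / ηu) * (B (t + 1) - B t) ≥ A t - B t)
    (hD : B 0 - A 0 = D) (hDpos : 0 < D)
    (hgap : B T - A T ≤ R) (hRD : R < D) :
    A T - A 0 ≥ (ηc / (ηu + ηc)) * (D - R) := by
  subst hD
  have key : ∀ n ≤ T, ηu * (1 + ηc) * A n + ηc * (1 + ηu) * B n ≥
      ηu * (1 + ηc) * A 0 + ηc * (1 + ηu) * B 0 := by
    intro n hn
    induction n with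
    | zero => exact le_refl _
    | succ k ih =>
      have hk : k < T := lt_of_lt_of_le (Nat.lt_succ_self k) hn
      have ihk := ih (le_of_lt hk)
      have h1 := hA k hk
      have h2 := hB k hk
      rw [ge_iff_le, div_mul_eq_mul_div, le_div_iff₀ hηc] at h1
      rw [ge_iff_le, div_mul_eq_mul_div, le_div_iff₀ hηu] at h2
      nlinarith [mul_pos hηu hηc]
  have h := key T le_rfl
  have hS : (A T - A 0) * (ηu * (1 + ηc) + ηc * (1 + ηu)) ≥ ηc * (1 + ηu) * (B 0 - A 0 - R) := by
    nlinarith [mul_nonneg (mul_nonneg hηc.le (show (0:ℝ) ≤ 1 + ηu by linarith))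
      (show (0:ℝ) ≤ R - (B T - A T) by linarith)]
  have hDR : 0 < B 0 - A 0 - R := by linarith
  set X := A T - A 0 with hX
  have hXpos : 0 < X := by
    nlinarith [mul_pos (mul_pos hηc (show (0:ℝ) < 1 + ηu by linarith)) hDR,
      mul_pos hηu hηc]
  rw [ge_iff_le, div_mul_eq_mul_div, div_le_iff₀ (by linarith : (0:ℝ) < ηu + ηc)]
  nlinarith [mul_pos hηu hηc, mul_pos hXpos hηc, mul_pos (mul_pos hXpos hηu) hηu,
    mul_nonneg (mul_nonneg hXpos.le hηu.le) (sub_nonneg.2 hcu)]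
end
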